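/- arXiv:2104.05016 — 5 statements merged into one kernel-verified Lean document; each statement's English description precedes it below -/
import Mathlib

section
/- Let H be a 4-uniform hypergraph with vertex set V = A ∪ B, where A and B are disjoint and |A| = |B| = n. Suppose the number of edges of H with exactly two vertices in A is less than c·n^4, and every set of 3 vertices of V is contained in at least (1−c₁)·n edges of H. Let H₀ be the 4-graph on the same vertex set whose edges are all quadruples intersecting A in exactly one or three vertices. Then |E(H₀) \ E(H)| ≤ (1/3)(c₁+4c)·n^4 + O(n^3); more precisely |E(H₀)\E(H)| ≤ (1/3)(c₁+4c)·n^4 + 10·n^3 for all sufficiently large n. -/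
/-!
Count the pairs `(S, x)` where `S` is a 3-set meeting `A` in one vertex and `x ∈ B` is such that
`S ∪ {x}` is a missing edge meeting `A` once: every such missing 4-set yields three pairs. The
codegree condition lets a fixed `S` miss at most `c₁ n` vertices of `B` beyond the number of
vertices of `A` that extend it to an edge, and those extensions are edges of `H(A,A,B,B)`, each
arising at most twice. As there are at most `n³/2` choices of `S`, the missing 4-sets meeting `A`
once number at most `(c₁ n⁴/2 + 2 c n⁴)/3`; the same bound holds with `A` and `B` swapped.
-/

open Finset

namespace Finset

variable {V : Type*} [DecidableEq V]

def link (H : Finset (Finset V)) (S X : Finset V) : Finset V :=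
  X.filter (fun x => x ∉ S ∧ insert x S ∈ H)

theorem sum_card_link_eq (𝒯 F : Finset (Finset V)) (X : Finset V) :
    ∑ S ∈ 𝒯, (link F S X).card = ∑ e ∈ F, ((e ∩ X).filter (fun x => e.erase x ∈ 𝒯)).card := by
  rw [← card_sigma, ← card_sigma]
  refine card_nbij' (fun p => ⟨insert p.2 p.1, p.2⟩) (fun p => ⟨p.1.erase p.2, p.2⟩)
    ?_ ?_ ?_ ?_ <;> rintro ⟨S, x⟩ <;> simp +contextual [link]

theorem link_mono {F G : Finset (Finset V)} (h : F ⊆ G) (S X : Finset V) :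
    link F S X ⊆ link G S X :=
  monotone_filter_right _ fun _ _ hx => ⟨hx.1, h hx.2⟩

variable [Fintype V]

theorem card_link_add_card_link_compl (H : Finset (Finset V)) (S X : Finset V) :
    (link H S X).card + (link Hᶜ S X).card = (X \ S).card := by
  rw [← card_filter_add_card_filter_not (s := X \ S) (fun x => insert x S ∈ H)]
  congr 2 <;> ext x <;> simp [link, and_assoc]

theorem card_link_univ (H : Finset (Finset V)) (S A : Finset V) :
    (link H S univ).card = (link H S A).card + (link H S Aᶜ).card := by
  rw [← card_filter_add_card_filter_not (s := link H S univ) (· ∈ A)]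
  congr 2 <;> ext x <;> simp [link, and_comm]

theorem card_inter_add_card_inter_compl (e A : Finset V) :
    (e ∩ A).card + (e ∩ Aᶜ).card = e.card := by
  rw [← sdiff_eq_inter_compl, card_inter_add_card_sdiff]

def setsMeeting (A : Finset V) (k i : ℕ) : Finset (Finset V) :=
  (univ.powersetCard k).filter (fun S => (S ∩ A).card = i)

theorem mem_setsMeeting {A S : Finset V} {k i : ℕ} :
    S ∈ setsMeeting A k i ↔ S.card = k ∧ (S ∩ A).card = i := by
  simp [setsMeeting]

theorem card_setsMeeting_le (A : Finset V) (k i : ℕ) :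
    (setsMeeting A k i).card ≤ A.card.choose i * Aᶜ.card.choose (k - i) := by
  rw [← card_powersetCard, ← card_powersetCard, ← card_product]
  refine card_le_card_of_injOn (fun S => (S ∩ A, S ∩ Aᶜ)) (fun S hS => ?_) (fun S _ T _ h => ?_)
  · obtain ⟨hk, hi⟩ := mem_setsMeeting.1 hS
    have := card_inter_add_card_inter_compl S A
    simp only [coe_product, Set.mem_prod, mem_coe, mem_powersetCard, inter_subset_right,
      true_and, hi]
    omega
  · rw [← sup_inf_inf_compl (x := S) (y := A), ← sup_inf_inf_compl (x := T) (y := A)]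
    exact congrArg₂ (· ⊔ ·) congr($h.1) congr($h.2)

theorem three_mul_card_sdiff_le_sum_card_link (A : Finset V) (H : Finset (Finset V)) :
    3 * (setsMeeting A 4 1 \ H).card ≤ ∑ S ∈ setsMeeting A 3 1, (link Hᶜ S Aᶜ).card := by
  set M := setsMeeting A 4 1 \ H
  have erase_mem : ∀ e ∈ M, ∀ x ∈ e ∩ Aᶜ, e.erase x ∈ setsMeeting A 3 1 := by
    intro e he x hx
    obtain ⟨⟨he4, he1⟩, -⟩ := And.imp_left mem_setsMeeting.1 (mem_sdiff.1 he)
    have hxA : x ∉ e ∩ A := fun h => mem_compl.1 (mem_inter.1 hx).2 (mem_inter.1 h).2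
    rw [mem_setsMeeting, card_erase_of_mem (mem_inter.1 hx).1, erase_inter,
      erase_eq_of_notMem hxA, he4, he1]
    exact ⟨rfl, rfl⟩
  calc 3 * M.card = ∑ e ∈ M, (e ∩ Aᶜ).card := by
        rw [sum_const_nat fun e he => ?_, mul_comm]
        obtain ⟨⟨he4, he1⟩, -⟩ := And.imp_left mem_setsMeeting.1 (mem_sdiff.1 he)
        have := card_inter_add_card_inter_compl e A
        omega
    _ = ∑ e ∈ M, ((e ∩ Aᶜ).filter (fun x => e.erase x ∈ setsMeeting A 3 1)).card :=
        sum_congr rfl fun e he => by rw [filter_true_of_mem (erase_mem e he)]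
    _ = ∑ S ∈ setsMeeting A 3 1, (link M S Aᶜ).card := (sum_card_link_eq _ _ _).symm
    _ ≤ ∑ S ∈ setsMeeting A 3 1, (link Hᶜ S Aᶜ).card :=
        sum_le_sum fun S _ => card_le_card <|
          link_mono (fun e he => mem_compl.2 (mem_sdiff.1 he).2) S Aᶜ

theorem sum_card_link_le_two_mul (A : Finset V) (H : Finset (Finset V)) :
    ∑ S ∈ setsMeeting A 3 1, (link H S A).card
      ≤ 2 * (H.filter (fun e => (e ∩ A).card = 2)).card := by
  set H₂ := H.filter (fun e => (e ∩ A).card = 2)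
  calc ∑ S ∈ setsMeeting A 3 1, (link H S A).card
        = ∑ S ∈ setsMeeting A 3 1, (link H₂ S A).card := by
        refine sum_congr rfl fun S hS => congrArg card (filter_congr fun x hx => ?_)
        have hS1 := (mem_setsMeeting.1 hS).2
        simp only [H₂, mem_filter, insert_inter_of_mem hx]
        refine and_congr_right fun hxS => (and_iff_left ?_).symm
        rw [card_insert_of_notMem fun h => hxS (mem_inter.1 h).1, hS1]
    _ = ∑ e ∈ H₂, ((e ∩ A).filter (fun x => e.erase x ∈ setsMeeting A 3 1)).card :=
        sum_card_link_eq _ _ _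
    _ ≤ ∑ e ∈ H₂, (e ∩ A).card := sum_le_sum fun e _ => card_filter_le _ _
    _ = 2 * H₂.card := by
        rw [sum_const_nat fun e he => (mem_filter.1 he).2, mul_comm]

theorem card_link_compl_le {H : Finset (Finset V)} {S A : Finset V} {n : ℕ} {c₁ : ℝ}
    (hAc : Aᶜ.card = n) (hS : (1 - c₁) * n ≤ (link H S univ).card) :
    ((link Hᶜ S Aᶜ).card : ℝ) ≤ c₁ * n + (link H S A).card := by
  have h_univ := card_link_univ H S A
  have h_compl := card_link_add_card_link_compl H S Aᶜ
  have h_le : (Aᶜ \ S).card ≤ n := hAc ▸ card_le_card sdiff_subset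
  have : ((link H S Aᶜ).card : ℝ) + (link Hᶜ S Aᶜ).card ≤ n := by exact_mod_cast h_compl ▸ h_le
  rw [h_univ] at hS
  push_cast at hS
  linarith

theorem three_mul_card_setsMeeting_sdiff_le {H : Finset (Finset V)} {A : Finset V} {n : ℕ}
    {c₁ : ℝ} (hc₁ : 0 ≤ c₁) (hA : A.card = n) (hAc : Aᶜ.card = n)
    (hcod : ∀ S : Finset V, S.card = 3 → (1 - c₁) * n ≤ (link H S univ).card) :
    3 * ((setsMeeting A 4 1 \ H).card : ℝ)
      ≤ c₁ / 2 * n ^ 4 + 2 * (H.filter (fun e => (e ∩ A).card = 2)).card := by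
  set T := setsMeeting A 3 1
  have hT : (T.card : ℝ) ≤ n ^ 3 / 2 :=
    calc (T.card : ℝ) ≤ (n * n.choose 2 : ℕ) := by
          exact_mod_cast (card_setsMeeting_le A 3 1).trans_eq (by rw [hA, hAc, Nat.choose_one_right])
      _ ≤ n * (n ^ 2 / 2) := by
          push_cast
          gcongr
          simpa using Nat.choose_le_pow_div (α := ℝ) 2 n
      _ = n ^ 3 / 2 := by ring
  calc 3 * ((setsMeeting A 4 1 \ H).card : ℝ) ≤ ∑ S ∈ T, ((link Hᶜ S Aᶜ).card : ℝ) := by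
        exact_mod_cast three_mul_card_sdiff_le_sum_card_link A H
    _ ≤ ∑ S ∈ T, (c₁ * n + (link H S A).card) :=
        sum_le_sum fun S hS => card_link_compl_le hAc (hcod S (mem_setsMeeting.1 hS).1)
    _ = T.card * (c₁ * n) + ∑ S ∈ T, ((link H S A).card : ℝ) := by
        rw [sum_add_distrib, sum_const, nsmul_eq_mul]
    _ ≤ n ^ 3 / 2 * (c₁ * n) + 2 * (H.filter (fun e => (e ∩ A).card = 2)).card := by
        gcongr
        exact_mod_cast sum_card_link_le_two_mul A H
    _ = c₁ / 2 * n ^ 4 + 2 * (H.filter (fun e => (e ∩ A).card = 2)).card := by ring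

theorem filter_card_inter_eq_one_or_three (A : Finset V) :
    (univ.powersetCard 4).filter (fun e => (e ∩ A).card = 1 ∨ (e ∩ A).card = 3)
      = setsMeeting A 4 1 ∪ setsMeeting Aᶜ 4 1 := by
  ext e
  have := card_inter_add_card_inter_compl e A
  simp only [mem_filter, mem_powersetCard, subset_univ, true_and, mem_union, mem_setsMeeting]
  omega

theorem filter_card_inter_compl_eq_two {H : Finset (Finset V)} (hH : ∀ e ∈ H, e.card = 4)
    (A : Finset V) :
    H.filter (fun e => (e ∩ Aᶜ).card = 2) = H.filter (fun e => (e ∩ A).card = 2) :=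
  filter_congr fun e he => by
    have := card_inter_add_card_inter_compl e A
    have := hH e he
    omega

end Finset

theorem stmt_0 :
    ∀ c c₁ : ℝ, 0 < c → 0 < c₁ → ∃ n₀ : ℕ, ∀ n : ℕ, n₀ ≤ n →
    ∀ (V : Type) [Fintype V] [DecidableEq V],
    ∀ (A B : Finset V) (H : Finset (Finset V)),
      Disjoint A B → A ∪ B = Finset.univ → A.card = n → B.card = n →
      (∀ e ∈ H, e.card = 4) →
      ((H.filter (fun e => (e ∩ A).card = 2)).card : ℝ) < c * n ^ 4 →
      (∀ S : Finset V, S.card = 3 →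
        (1 - c₁) * n ≤ ((Finset.univ.filter (fun x => x ∉ S ∧ insert x S ∈ H)).card : ℝ)) →
      (((((Finset.univ : Finset V).powersetCard 4).filter
            (fun e => (e ∩ A).card = 1 ∨ (e ∩ A).card = 3)) \ H).card : ℝ)
        ≤ (1/3) * (c₁ + 4*c) * n ^ 4 + 10 * n ^ 3 := by
  intro c c₁ _ hc₁
  refine ⟨0, fun n _ V _ _ A B H hd hu hA hB hH hH₂ hcod => ?_⟩
  obtain rfl : B = Aᶜ := (IsCompl.compl_eq ⟨hd, codisjoint_iff.2 hu⟩).symm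
  have hA_side := three_mul_card_setsMeeting_sdiff_le hc₁.le hA hB hcod
  have hB_side := three_mul_card_setsMeeting_sdiff_le hc₁.le hB (by rwa [compl_compl]) hcod
  rw [filter_card_inter_compl_eq_two hH] at hB_side
  have h_split : (((setsMeeting A 4 1 ∪ setsMeeting Aᶜ 4 1) \ H).card : ℝ)
      ≤ (setsMeeting A 4 1 \ H).card + (setsMeeting Aᶜ 4 1 \ H).card := by
    rw [union_sdiff_distrib]
    exact_mod_cast card_union_le _ _
  rw [filter_card_inter_eq_one_or_three]
  have : (0 : ℝ) ≤ n ^ 3 := by positivity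
  linarith
end

section
/- For n ≥ 8 even, let H₀ be the 4-uniform hypergraph on vertex set A ∪ B with A ∩ B = ∅, |A| = |B| = n/2, whose edges are all quadruples having odd intersection with A. Then H₀ has no Hamiltonian path. -/
open Finset

/-- A Hamiltonian (tight) path in a 4-uniform hypergraph: an ordering of all the vertices
in which every 4 consecutive vertices form an edge. -/
def IsHamPath {V : Type} [Fintype V] [DecidableEq V] (H : Finset (Finset V)) : Prop :=
  ∃ L : List V, L.Nodup ∧ L.length = Fintype.card V ∧
    ∀ i : ℕ, i + 4 ≤ L.length → ((L.drop i).take 4).toFinset ∈ H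

lemma countP_eq_sum' {V : Type} (p : V → Bool) (d : V) :
    ∀ l : List V, l.countP p = ∑ i ∈ Finset.range l.length, (if p (l.getD i d) then 1 else 0)
  | [] => by simp
  | x :: l => by
      rw [List.countP_cons, List.length_cons, Finset.sum_range_succ']
      simp [countP_eq_sum' p d l]

theorem stmt_9 (n : ℕ) (hn : 8 ≤ n) (heven : Even n)
    {V : Type} [Fintype V] [DecidableEq V]
    (A B : Finset V) (hdisj : Disjoint A B) (hunion : A ∪ B = Finset.univ)
    (hA : A.card = n / 2) (hB : B.card = n / 2) :
    ¬ IsHamPath (((Finset.univ : Finset V).powersetCard 4).filter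
        (fun e => Odd (e ∩ A).card)) := by
  rintro ⟨L, hnod, hlen, hwin⟩
  have hev2 : n % 2 = 0 := Nat.even_iff.mp heven
  have hcardV : Fintype.card V = n := by
    have := Finset.card_union_of_disjoint hdisj
    rw [hunion, Finset.card_univ, hA, hB] at this
    omega
  have hLn : L.length = n := by rw [hlen, hcardV]
  have hne : Nonempty V := by
    rw [← Fintype.card_pos_iff, hcardV]; omega
  obtain ⟨d⟩ := hne
  set g : ℕ → ℕ := fun i => if L.getD i d ∈ A then 1 else 0 with hg
  have hg1 : ∀ i, g i ≤ 1 := by intro i; simp [hg]; split <;> omega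
  -- window condition
  have hwodd : ∀ i, i + 4 ≤ n → g i + g (i+1) + g (i+2) + g (i+3) = 1 ∨
      g i + g (i+1) + g (i+2) + g (i+3) = 3 := by
    intro i hi
    have hmem := hwin i (by omega)
    rw [Finset.mem_filter] at hmem
    obtain ⟨-, hodd⟩ := hmem
    set w := (L.drop i).take 4 with hw
    have hwlen : w.length = 4 := by simp [hw]; omega
    have hwnd : w.Nodup := (((L.drop i).take_sublist 4).trans (L.drop_sublist i)).nodup hnod
    have hget : ∀ j, j < 4 → w.getD j d = L.getD (i + j) d := by
      intro j hj
      rw [List.getD_eq_getElem w d (by omega), List.getD_eq_getElem L d (by omega)]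
      simp [hw, List.getElem_take, List.getElem_drop]
    have hcard : (w.toFinset ∩ A).card = g i + g (i+1) + g (i+2) + g (i+3) := by
      have e : w.toFinset ∩ A = (w.filter (fun v => decide (v ∈ A))).toFinset := by
        ext x; simp
      rw [e, List.toFinset_card_of_nodup (hwnd.filter _),
        ← List.countP_eq_length_filter, countP_eq_sum' _ d, hwlen]
      rw [Finset.sum_range_succ, Finset.sum_range_succ, Finset.sum_range_succ,
        Finset.sum_range_succ, Finset.sum_range_zero,
        hget 0 (by omega), hget 1 (by omega), hget 2 (by omega), hget 3 (by omega)]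
      simp [hg]
    rw [hcard] at hodd
    have h4 := hg1 i; have h5 := hg1 (i+1); have h6 := hg1 (i+2); have h7 := hg1 (i+3)
    rcases hodd with ⟨t, ht⟩
    omega
  -- periodicity
  have hstep : ∀ i, i + 5 ≤ n → g (i + 4) = g i := by
    intro i hi
    have h1 := hwodd i (by omega)
    have h2 := hwodd (i+1) (by omega)
    have e1 : i + 1 + 1 = i + 2 := rfl
    have e2 : i + 1 + 2 = i + 3 := rfl
    have e3 : i + 1 + 3 = i + 4 := rfl
    rw [e1, e2, e3] at h2
    have h3 := hg1 i; have h4 := hg1 (i+4)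
    omega
  have hper : ∀ j, j < n → g j = g (j % 4) := by
    intro j
    induction j using Nat.strong_induction_on with
    | _ j IH =>
      intro hj
      rcases lt_or_ge j 4 with h | h
      · rw [Nat.mod_eq_of_lt h]
      · obtain ⟨i, rfl⟩ : ∃ i, j = i + 4 := ⟨j - 4, by omega⟩
        rw [hstep i (by omega), IH i (by omega) (by omega)]
        congr 1
        omega
  -- A.card as sum
  have hLuniv : L.toFinset = Finset.univ := by
    apply Finset.eq_univ_of_card
    rw [List.toFinset_card_of_nodup hnod, hlen]
  have hAsum : A.card = ∑ i ∈ Finset.range n, g i := by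
    have e : A = (L.filter (fun v => decide (v ∈ A))).toFinset := by
      ext x
      simp
      intro _
      rw [← List.mem_toFinset, hLuniv]
      exact Finset.mem_univ x
    rw [e, List.toFinset_card_of_nodup (hnod.filter _),
      ← List.countP_eq_length_filter, countP_eq_sum' _ d, hLn]
    apply Finset.sum_congr rfl
    intro i _
    simp [hg]
  have hAsum2 : A.card = ∑ i ∈ Finset.range n, g (i % 4) :=
    hAsum.trans (Finset.sum_congr rfl fun i hi => hper i (Finset.mem_range.1 hi))
  -- periodic sum
  set k := g 0 + g 1 + g 2 + g 3 with hk
  have hsum4 : ∀ t, ∑ i ∈ Finset.range (t + 4), g (i % 4)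
      = (∑ i ∈ Finset.range t, g (i % 4)) + k := by
    intro t
    have key : g (t % 4) + g ((t+1) % 4) + g ((t+2) % 4) + g ((t+3) % 4) = k := by
      have a1 : (t+1) % 4 = (t % 4 + 1) % 4 := by omega
      have a2 : (t+2) % 4 = (t % 4 + 2) % 4 := by omega
      have a3 : (t+3) % 4 = (t % 4 + 3) % 4 := by omega
      rw [a1, a2, a3, hk]
      have h4 : t % 4 < 4 := Nat.mod_lt _ (by omega)
      interval_cases h : t % 4 <;> norm_num <;> ring
    rw [show t + 4 = (((t+1)+1)+1)+1 by ring, Finset.sum_range_succ, Finset.sum_range_succ,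
      Finset.sum_range_succ, Finset.sum_range_succ]
    omega
  have hmsum : ∀ m r, ∑ i ∈ Finset.range (4 * m + r), g (i % 4)
      = m * k + ∑ i ∈ Finset.range r, g (i % 4) := by
    intro m
    induction m with
    | zero => simp
    | succ m IH => intro r; rw [show 4 * (m+1) + r = (4*m+r) + 4 by ring, hsum4, IH]; ring
  have hkodd : k = 1 ∨ k = 3 := hwodd 0 (by omega)
  have hA2 : A.card = n / 2 := hA
  have h01 : g 0 ≤ 1 := hg1 0
  have h11 : g 1 ≤ 1 := hg1 1
  rcases Nat.even_or_odd (n / 2) with ⟨m, hm⟩ | ⟨m, hm⟩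
  · -- n = 4m
    have hn4 : n = 4 * m + 0 := by omega
    rw [hAsum2, hn4, hmsum] at hA2
    simp at hA2
    rcases hkodd with h | h <;> rw [h] at hA2 <;> omega
  · -- n = 4m + 2
    have hn4 : n = 4 * m + 2 := by omega
    rw [hAsum2, hn4, hmsum] at hA2
    rw [Finset.sum_range_succ, Finset.sum_range_succ, Finset.sum_range_zero] at hA2
    norm_num at hA2
    rcases hkodd with h | h <;> rw [h] at hA2 <;> omega
end

section
/- Every k-uniform hypergraph F (k ≥ 2) with m vertices and at least a·C(m,k) edges contains a tight path on at least a·m/k vertices. -/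
/-!
Let `t` be the largest integer below `a (m - k + 1) / k`. Since
`k C(m,k) = (m - k + 1) C(m,k-1)`, we get `t |∂F| ≤ t C(m,k-1) < a C(m,k) ≤ |F|` for the
`(k-1)`-shadow `∂F`. So if we repeatedly delete all edges through a `(k-1)`-set of codegree at
most `t`, some edge survives, and in the remaining family every `(k-1)`-set of the shadow has
more than `t` extensions to an edge. Starting from any edge, a tight path can then be grown
greedily: its last `k - 1` vertices have an extension outside the path as long as it has fewer
than `k + t` vertices, and `k + t ≥ a m / k`.
-/

open Finset
open scoped FinsetFamily

namespace Hypergraph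

variable {V : Type*} [DecidableEq V]

def IsTightPath (G : Finset (Finset V)) (k : ℕ) (L : List V) : Prop :=
  L.Nodup ∧ ∀ i, i + k ≤ L.length → ((L.drop i).take k).toFinset ∈ G

variable {G H : Finset (Finset V)} {k : ℕ} {L : List V}

theorem IsTightPath.mono (hL : IsTightPath G k L) (hGH : G ⊆ H) : IsTightPath H k L :=
  ⟨hL.1, fun i hi => hGH (hL.2 i hi)⟩

theorem isTightPath_toList {e : Finset V} (hG : (G : Set (Finset V)).Sized k) (he : e ∈ G) :
    IsTightPath G k e.toList := by
  refine ⟨e.nodup_toList, fun i hi => ?_⟩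
  rw [length_toList, hG he] at hi
  obtain rfl : i = 0 := by omega
  rw [List.drop_zero, List.take_of_length_le (by rw [length_toList, hG he]), toList_toFinset]
  exact he

theorem IsTightPath.append_singleton {v : V} (hk : 1 ≤ k) (hL : IsTightPath G k L) (hv : v ∉ L)
    (hedge : insert v (L.drop (L.length + 1 - k)).toFinset ∈ G) :
    IsTightPath G k (L ++ [v]) := by
  refine ⟨List.nodup_append.2 ⟨hL.1, List.nodup_singleton v, ?_⟩, fun i hi => ?_⟩
  · rintro w hw u hu rfl
    exact hv (List.mem_singleton.1 hu ▸ hw)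
  rw [List.length_append, List.length_singleton] at hi
  rw [List.drop_append_of_le_length (by omega)]
  rcases Nat.lt_or_ge L.length (i + k) with hlast | hinner
  · obtain rfl : i = L.length + 1 - k := by omega
    rw [List.take_of_length_le (by simp; omega), List.toFinset_append, union_comm]
    exact hedge
  · rw [List.take_append_of_le_length (by simp; omega)]
    exact hL.2 i hinner

theorem IsTightPath.toFinset_drop_mem_shadow (hk : 1 ≤ k) (hL : IsTightPath G k L)
    (hkL : k ≤ L.length) : (L.drop (L.length + 1 - k)).toFinset ∈ ∂ G := by
  have hlast := hL.2 (L.length - k) (by omega)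
  rw [List.take_of_length_le (by simp; omega),
    List.drop_eq_getElem_cons (by omega), List.toFinset_cons] at hlast
  have hnodup := (hL.1.sublist (List.drop_sublist (L.length - k) L))
  rw [List.drop_eq_getElem_cons (by omega), List.nodup_cons] at hnodup
  rw [show L.length + 1 - k = L.length - k + 1 by omega, mem_shadow_iff_insert_mem]
  exact ⟨_, fun h => hnodup.1 (List.mem_toFinset.1 h), hlast⟩

variable [Fintype V]

def extensions (G : Finset (Finset V)) (S : Finset V) : Finset V :=
  {v | v ∉ S ∧ insert v S ∈ G}

theorem card_extensions {S : Finset V} (hG : (G : Set (Finset V)).Sized k) (hS : S ∈ ∂ G) :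
    #(extensions G S) = #{e ∈ G | S ⊆ e} := by
  obtain ⟨a, ha, haG⟩ := mem_shadow_iff_insert_mem.1 hS
  have hk : k = #S + 1 := by rw [← hG haG, card_insert_of_notMem ha]
  have himage : {e ∈ G | S ⊆ e} = (extensions G S).image (insert · S) := by
    ext e
    simp only [extensions, mem_filter, mem_image, mem_univ, true_and]
    constructor
    · rintro ⟨heG, hSe⟩
      obtain ⟨v, hv, rfl⟩ := exists_eq_insert_iff.2 ⟨hSe, by rw [hG heG, hk]⟩
      exact ⟨v, ⟨hv, heG⟩, rfl⟩
    · rintro ⟨v, ⟨-, hvG⟩, rfl⟩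
      exact ⟨hvG, subset_insert v S⟩
  rw [himage, card_image_of_injOn]
  intro v hv w hw hvw
  simp only [extensions, coe_filter, mem_univ, true_and] at hv hw
  exact insert_inj_on S hv.1 hw.1 hvw

theorem exists_subset_forall_lt_card_extensions {t : ℕ} (hG : (G : Set (Finset V)).Sized k)
    (h : t * #(∂ G) < #G) :
    ∃ G' ⊆ G, G'.Nonempty ∧ ∀ S ∈ ∂ G', t < #(extensions G' S) := by
  induction G using Finset.strongInduction with
  | H G ih =>
  by_cases hdeg : ∀ S ∈ ∂ G, t < #(extensions G S)
  · exact ⟨G, subset_rfl, card_pos.1 (by omega), hdeg⟩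
  push Not at hdeg
  obtain ⟨S, hS, hSt⟩ := hdeg
  set G₂ := {e ∈ G | ¬ S ⊆ e}
  have hsplit : #{e ∈ G | S ⊆ e} + #G₂ = #G := card_filter_add_card_filter_not _
  have hdel : #{e ∈ G | S ⊆ e} ≤ t := card_extensions hG hS ▸ hSt
  have hshadow : ∂ G₂ ⊆ (∂ G).erase S := by
    intro T hT
    refine mem_erase.2 ⟨?_, shadow_mono (filter_subset _ _) hT⟩
    rintro rfl
    obtain ⟨e, he, hTe, -⟩ := mem_shadow_iff_exists_sdiff.1 hT
    exact (mem_filter.1 he).2 hTe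
  have hcard : #(∂ G₂) + 1 ≤ #(∂ G) := by
    have := card_le_card hshadow
    rw [card_erase_of_mem hS] at this
    have := card_pos.2 ⟨S, hS⟩
    omega
  have hG₂ : t * #(∂ G₂) < #G₂ := by nlinarith
  have hssub : G₂ ⊂ G := by
    obtain ⟨e, he, hSe, -⟩ := mem_shadow_iff_exists_sdiff.1 hS
    exact filter_ssubset.2 ⟨e, he, not_not.2 hSe⟩
  obtain ⟨G', hG', hne, hdeg⟩ := ih G₂ hssub (hG.mono (filter_subset _ _)) hG₂
  exact ⟨G', hG'.trans (filter_subset _ _), hne, hdeg⟩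

theorem IsTightPath.exists_append_singleton (hk : 1 ≤ k) (hL : IsTightPath G k L)
    (hext : L.length + 1 - k < #(extensions G (L.drop (L.length + 1 - k)).toFinset)) :
    ∃ v, IsTightPath G k (L ++ [v]) := by
  set S := (L.drop (L.length + 1 - k)).toFinset
  have hSL : S ⊆ L.toFinset := fun v hv =>
    List.mem_toFinset.2 ((List.drop_sublist _ _).subset (List.mem_toFinset.1 hv))
  have hS : #S = L.length - (L.length + 1 - k) := by
    rw [List.toFinset_card_of_nodup (hL.1.sublist (List.drop_sublist _ _)), List.length_drop]
  obtain ⟨v, hv, hvL⟩ : ∃ v ∈ extensions G S, v ∉ L.toFinset := by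
    by_contra! h
    have hdisj : Disjoint (extensions G S) S := disjoint_left.2 fun v hv => (mem_filter.1 hv).2.1
    have := card_le_card (union_subset h hSL)
    rw [card_union_of_disjoint hdisj, List.toFinset_card_of_nodup hL.1] at this
    omega
  exact ⟨v, hL.append_singleton hk (fun h => hvL (List.mem_toFinset.2 h)) (mem_filter.1 hv).2.2⟩

theorem exists_isTightPath_length {t : ℕ} (hk : 1 ≤ k) (hG : (G : Set (Finset V)).Sized k)
    (hne : G.Nonempty) (hdeg : ∀ S ∈ ∂ G, t < #(extensions G S)) {j : ℕ} (hj : j ≤ t) :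
    ∃ L, IsTightPath G k L ∧ L.length = k + j := by
  induction j with
  | zero =>
    obtain ⟨e, he⟩ := hne
    exact ⟨e.toList, isTightPath_toList hG he, by rw [length_toList, hG he, add_zero]⟩
  | succ j ih =>
    obtain ⟨L, hL, hlen⟩ := ih (by omega)
    have hS := hdeg _ (hL.toFinset_drop_mem_shadow hk (by omega))
    obtain ⟨v, hv⟩ := hL.exists_append_singleton hk (by omega)
    exact ⟨L ++ [v], hv, by rw [List.length_append, List.length_singleton, hlen, add_assoc]⟩

theorem exists_isTightPath_length_of_mul_card_shadow_lt {t : ℕ} (hk : 1 ≤ k)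
    (hG : (G : Set (Finset V)).Sized k) (h : t * #(∂ G) < #G) :
    ∃ L, IsTightPath G k L ∧ L.length = k + t := by
  obtain ⟨G', hG'G, hne, hdeg⟩ := exists_subset_forall_lt_card_extensions hG h
  obtain ⟨L, hL, hlen⟩ := exists_isTightPath_length hk (hG.mono hG'G) hne hdeg le_rfl
  exact ⟨L, hL.mono hG'G, hlen⟩

end Hypergraph

theorem Nat.cast_choose_mul_eq {R : Type*} [CommRing R] {m k : ℕ} (hk : 1 ≤ k) (hkm : k ≤ m) :
    (m.choose k : R) * k = m.choose (k - 1) * (m - k + 1) := by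
  obtain ⟨j, rfl⟩ := Nat.exists_eq_add_of_le' hk
  have h := congrArg (Nat.cast : ℕ → R) (Nat.choose_succ_right_eq m j)
  push_cast [Nat.cast_sub (by omega : j ≤ m)] at h
  rw [Nat.add_sub_cancel]
  push_cast
  linear_combination h

theorem exists_codegree_threshold {m k : ℕ} {a : ℝ} (hk : 1 ≤ k) (hkm : k ≤ m) (ha : 0 < a)
    (ha1 : a ≤ 1) :
    ∃ t : ℕ, (t * m.choose (k - 1) : ℝ) < a * m.choose k ∧ a * m / k ≤ k + t := by
  have hk1 : (1 : ℝ) ≤ k := by exact_mod_cast hk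
  have hkm' : (k : ℝ) ≤ m := by exact_mod_cast hkm
  set x : ℝ := a * (m - k + 1) / k
  have hx : 0 < x := by positivity
  have hxk : x * k = a * (m - k + 1) := div_mul_cancel₀ _ (by positivity)
  have hchoose : x * m.choose (k - 1) = a * m.choose k := by
    refine mul_right_cancel₀ (by positivity : (k : ℝ) ≠ 0) ?_
    linear_combination (m.choose (k - 1) : ℝ) * hxk - a * Nat.cast_choose_mul_eq (R := ℝ) hk hkm
  have hpos : (0 : ℝ) < m.choose (k - 1) := by exact_mod_cast Nat.choose_pos (by omega)
  refine ⟨⌈x⌉₊ - 1, ?_, ?_⟩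
  all_goals rw [Nat.cast_sub (Nat.ceil_pos.2 hx), Nat.cast_one]
  · nlinarith [Nat.ceil_lt_add_one hx.le]
  · rw [div_le_iff₀ (by positivity)]
    nlinarith [mul_le_mul_of_nonneg_right (Nat.le_ceil x) (by positivity : (0 : ℝ) ≤ k),
      mul_le_mul_of_nonneg_right ha1 (by linarith : (0 : ℝ) ≤ k - 1), sq_nonneg ((k : ℝ) - 1)]

theorem stmt_11 (k : ℕ) (hk : 2 ≤ k) (a : ℝ) (ha : 0 < a) (ha1 : a ≤ 1)
    {V : Type} [Fintype V] [DecidableEq V] (F : Finset (Finset V))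
    (hF : ∀ e ∈ F, e.card = k)
    (hcount : a * ((Fintype.card V).choose k) ≤ (F.card : ℝ)) :
    ∃ L : List V, L.Nodup ∧
      (∀ i : ℕ, i + k ≤ L.length → ((L.drop i).take k).toFinset ∈ F) ∧
      a * (Fintype.card V) / k ≤ (L.length : ℝ) := by
  set m := Fintype.card V
  rcases lt_or_ge m k with hmk | hkm
  · refine ⟨univ.toList, nodup_toList _, fun i hi => ?_, ?_⟩
    · rw [length_toList, card_univ] at hi
      omega
    · rw [length_toList, card_univ, div_le_iff₀ (by positivity)]
      have hk1 : (1 : ℝ) ≤ k := by exact_mod_cast (by omega : 1 ≤ k)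
      nlinarith [(Nat.cast_nonneg m : (0 : ℝ) ≤ m)]
  obtain ⟨t, hthreshold, hlength⟩ := exists_codegree_threshold (by omega) hkm ha ha1
  have hlt : t * #(∂ F) < #F := by
    have hshadow : (#(∂ F) : ℝ) ≤ m.choose (k - 1) := by
      exact_mod_cast (Set.Sized.shadow hF).card_le
    have : (t * #(∂ F) : ℝ) < #F := by
      calc (t * #(∂ F) : ℝ) ≤ t * m.choose (k - 1) := by gcongr
        _ < #F := hthreshold.trans_le hcount
    exact_mod_cast this
  obtain ⟨L, hL, hlen⟩ :=
    Hypergraph.exists_isTightPath_length_of_mul_card_shadow_lt (by omega) hF hlt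
  exact ⟨L, hL.1, hL.2, by rw [hlen]; push_cast; exact hlength⟩
end

section
/- Let H be a 4-uniform hypergraph with a balanced bipartition A ∪ B, |A| = |B| = n, chosen so that |H(A,A,B,B)| is minimum over all balanced bipartitions, and suppose δ₃(H) ≥ n−1. For v ∈ V define I_v = l_v^{AAB} − l_v^{ABB}. Then for all a ∈ A and b ∈ B, I_a ≥ I_b − 4n², where the error term accounts for edges containing both a and b. -/
/-!
Moving `a ∈ A` to the other side and `b ∈ B` to `A` changes `|e ∩ A|` only for edges `e`
containing exactly one of `a`, `b`, and for those it is shifted by one. Hence the change in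
`|H(A,A,B,B)|` is the difference of the link imbalances of `a` and `b`, computed on links avoiding
the other vertex; minimality makes it nonnegative. Restoring the triples through the other vertex
costs at most twice the codegree of `a` and `b`, which is at most `(2n - 2).choose 2 ≤ 2n²`.
-/

open Finset

/-- Number of triples of link type (i vertices in A, j vertices in B) in the link of `v`. -/
def linkCount {V : Type} [Fintype V] [DecidableEq V] (H : Finset (Finset V)) (v : V)
    (A B : Finset V) (i j : ℕ) : ℕ :=
  (((Finset.univ : Finset V).powersetCard 3).filter
    (fun T => v ∉ T ∧ (T ∩ A).card = i ∧ (T ∩ B).card = j ∧ insert v T ∈ H)).card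

section
variable {V : Type*} [DecidableEq V]

lemma card_inter_insert_erase_add_ite {A : Finset V} {a b : V} (ha : a ∈ A) (hb : b ∉ A)
    (e : Finset V) :
    #(e ∩ insert b (A.erase a)) + (if a ∈ e then 1 else 0) =
      #(e ∩ A) + (if b ∈ e then 1 else 0) := by
  have hb' : b ∉ e ∩ A := fun h => hb (mem_inter.mp h).2
  have hb'' : b ∉ (e ∩ A).erase a := fun h => hb' (mem_of_mem_erase h)
  by_cases hae : a ∈ e
  · have := card_pos.mpr ⟨a, mem_inter.mpr ⟨hae, ha⟩⟩
    by_cases hbe : b ∈ e <;> simp [hae, hbe, ha, hb'', inter_erase] <;> omega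
  · by_cases hbe : b ∈ e <;> simp [hae, hbe, hb', inter_erase]

lemma card_filter_inter_insert_erase_add {A : Finset V} {a b : V} (ha : a ∈ A) (hb : b ∉ A)
    (H : Finset (Finset V)) (k : ℕ) :
    #{e ∈ H | #(e ∩ insert b (A.erase a)) = k + 1} + #{e ∈ H | a ∈ e ∧ b ∉ e ∧ #(e ∩ A) = k + 1}
        + #{e ∈ H | b ∈ e ∧ a ∉ e ∧ #(e ∩ A) = k + 1} =
      #{e ∈ H | #(e ∩ A) = k + 1} + #{e ∈ H | a ∈ e ∧ b ∉ e ∧ #(e ∩ A) = k + 2}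
        + #{e ∈ H | b ∈ e ∧ a ∉ e ∧ #(e ∩ A) = k} := by
  simp only [card_filter, ← sum_add_distrib]
  refine sum_congr rfl fun e _ => ?_
  have := card_inter_insert_erase_add_ite ha hb e
  by_cases hae : a ∈ e <;> by_cases hbe : b ∈ e <;> simp [hae, hbe] at this ⊢ <;>
    split_ifs <;> omega

lemma card_filter_mem_le_add (H : Finset (Finset V)) (P : Finset V → Prop) [DecidablePred P]
    (v w : V) :
    #{e ∈ H | v ∈ e ∧ P e} ≤ #{e ∈ H | v ∈ e ∧ w ∉ e ∧ P e} + #{e ∈ H | v ∈ e ∧ w ∈ e} := by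
  simp only [card_filter, ← sum_add_distrib]
  refine sum_le_sum fun e _ => ?_
  split_ifs <;> simp_all

lemma card_filter_mem_add_le_of_swap {A : Finset V} {a b : V} (ha : a ∈ A) (hb : b ∉ A)
    {H : Finset (Finset V)} {k : ℕ}
    (hswap : #{e ∈ H | #(e ∩ A) = k + 1} ≤ #{e ∈ H | #(e ∩ insert b (A.erase a)) = k + 1}) :
    #{e ∈ H | b ∈ e ∧ #(e ∩ A) = k + 1} + #{e ∈ H | a ∈ e ∧ #(e ∩ A) = k + 1} ≤
      #{e ∈ H | a ∈ e ∧ #(e ∩ A) = k + 2} + #{e ∈ H | b ∈ e ∧ #(e ∩ A) = k}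
        + #{e ∈ H | a ∈ e ∧ b ∈ e} + #{e ∈ H | b ∈ e ∧ a ∈ e} := by
  have hcount := card_filter_inter_insert_erase_add ha hb H k
  have hsplit_a := card_filter_mem_le_add H (fun e => #(e ∩ A) = k + 1) a b
  have hsplit_b := card_filter_mem_le_add H (fun e => #(e ∩ A) = k + 1) b a
  beta_reduce at hsplit_a hsplit_b
  have hlow_a : #{e ∈ H | a ∈ e ∧ b ∉ e ∧ #(e ∩ A) = k + 2} ≤
      #{e ∈ H | a ∈ e ∧ #(e ∩ A) = k + 2} :=
    card_le_card (monotone_filter_right _ fun _ _ h => ⟨h.1, h.2.2⟩)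
  have hlow_b : #{e ∈ H | b ∈ e ∧ a ∉ e ∧ #(e ∩ A) = k} ≤ #{e ∈ H | b ∈ e ∧ #(e ∩ A) = k} :=
    card_le_card (monotone_filter_right _ fun _ _ h => ⟨h.1, h.2.2⟩)
  omega

lemma card_filter_mem_mem_le [Fintype V] {H : Finset (Finset V)} {k : ℕ}
    (hH : ∀ e ∈ H, #e = k) {a b : V} (hab : a ≠ b) :
    #{e ∈ H | a ∈ e ∧ b ∈ e} ≤ (Fintype.card V - 2).choose (k - 2) := by
  have hpair : ∀ e ∈ ({e ∈ H | a ∈ e ∧ b ∈ e} : Finset _), {a, b} ⊆ e := fun e he => by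
    simp only [mem_filter] at he
    exact insert_subset he.2.1 (singleton_subset_iff.mpr he.2.2)
  calc #{e ∈ H | a ∈ e ∧ b ∈ e}
      ≤ #((univ \ {a, b}).powersetCard (k - 2)) := by
        refine card_le_card_of_injOn (· \ {a, b}) (fun e he => ?_) fun e he e' he' hee' => ?_
        · rw [mem_coe, mem_powersetCard, card_sdiff_of_subset (hpair e he), card_pair hab,
            hH e (mem_filter.mp he).1]
          exact ⟨sdiff_subset_sdiff (subset_univ _) le_rfl, rfl⟩
        · rw [← sdiff_union_of_subset (hpair e he), ← sdiff_union_of_subset (hpair e' he')]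
          exact congrArg (· ∪ {a, b}) hee'
    _ = (Fintype.card V - 2).choose (k - 2) := by
        rw [card_powersetCard, card_sdiff_of_subset (subset_univ _), card_univ, card_pair hab]

end

section
variable {V : Type} [Fintype V] [DecidableEq V] {H : Finset (Finset V)}

lemma linkCount_compl (hH : ∀ e ∈ H, #e = 4) {i j : ℕ} (hij : i + j = 3) (v : V)
    (A : Finset V) : linkCount H v A Aᶜ i j = #{e ∈ H | v ∈ e ∧ #(e.erase v ∩ A) = i} := by
  have hsplit (T : Finset V) : #(T ∩ A) + #(T ∩ Aᶜ) = #T := by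
    rw [← sdiff_eq_inter_compl, card_inter_add_card_sdiff]
  refine card_nbij' (insert v) (·.erase v) (fun T hT => ?_) (fun e he => ?_)
    (fun T hT => erase_insert (mem_filter.mp hT).2.1)
    (fun e he => insert_erase (mem_filter.mp he).2.1)
  · obtain ⟨-, hvT, hi, -, hT⟩ := mem_filter.mp hT
    exact mem_filter.mpr ⟨hT, mem_insert_self v T, by rwa [erase_insert hvT]⟩
  · obtain ⟨he, hve, hi⟩ := mem_filter.mp he
    have h3 : #(e.erase v) = 3 := by rw [card_erase_of_mem hve, hH e he]
    refine mem_filter.mpr ⟨mem_powersetCard.mpr ⟨subset_univ _, h3⟩, notMem_erase v e, hi,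
      by have := hsplit (e.erase v); dsimp only; omega, by rwa [insert_erase hve]⟩

lemma linkCount_compl_of_mem (hH : ∀ e ∈ H, #e = 4) {i j : ℕ} (hij : i + j = 3) {v : V}
    {A : Finset V} (hv : v ∈ A) :
    linkCount H v A Aᶜ i j = #{e ∈ H | v ∈ e ∧ #(e ∩ A) = i + 1} := by
  rw [linkCount_compl hH hij]
  refine congrArg card (filter_congr fun e _ => and_congr_right fun hve => ?_)
  have : 0 < #(e ∩ A) := card_pos.mpr ⟨v, mem_inter.mpr ⟨hve, hv⟩⟩
  rw [erase_inter, card_erase_of_mem (mem_inter.mpr ⟨hve, hv⟩)]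
  omega

lemma linkCount_compl_of_notMem (hH : ∀ e ∈ H, #e = 4) {i j : ℕ} (hij : i + j = 3) {v : V}
    {A : Finset V} (hv : v ∉ A) :
    linkCount H v A Aᶜ i j = #{e ∈ H | v ∈ e ∧ #(e ∩ A) = i} := by
  rw [linkCount_compl hH hij]
  refine congrArg card (filter_congr fun e _ => and_congr_right fun _ => ?_)
  rw [erase_inter, erase_eq_of_notMem fun h => hv (mem_inter.mp h).2]

end

theorem stmt_15_general {V : Type} [Fintype V] [DecidableEq V] (n : ℕ)
    (A B : Finset V) (H : Finset (Finset V))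
    (hdisj : Disjoint A B) (hunion : A ∪ B = Finset.univ)
    (hA : A.card = n) (hB : B.card = n)
    (hedges : ∀ e ∈ H, e.card = 4)
    (hmin : ∀ A' B' : Finset V, Disjoint A' B' → A' ∪ B' = Finset.univ → A'.card = n →
      (H.filter (fun e => (e ∩ A).card = 2)).card ≤
        (H.filter (fun e => (e ∩ A').card = 2)).card) :
    ∀ a ∈ A, ∀ b ∈ B,
      ((linkCount H b A B 2 1 : ℝ) - (linkCount H b A B 1 2 : ℝ)) - 4 * n ^ 2 ≤
        (linkCount H a A B 2 1 : ℝ) - (linkCount H a A B 1 2 : ℝ) := by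
  intro a ha b hb
  obtain rfl : B = Aᶜ := (IsCompl.compl_eq ⟨hdisj, codisjoint_iff.mpr hunion⟩).symm
  have hbA : b ∉ A := mem_compl.mp hb
  have hab : a ≠ b := ne_of_mem_of_not_mem ha hbA
  have hswap : #{e ∈ H | #(e ∩ A) = 2} ≤ #{e ∈ H | #(e ∩ insert b (A.erase a)) = 2} :=
    hmin _ _ disjoint_compl_right (union_compl _) <| by
      rw [card_insert_of_notMem fun h => hbA (mem_of_mem_erase h), card_erase_of_mem ha, hA]
      have := card_pos.mpr ⟨a, ha⟩; omega
  have hkey := card_filter_mem_add_le_of_swap (k := 1) ha hbA hswap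
  have hcodeg : ((Fintype.card V - 2).choose 2 : ℝ) ≤ 2 * n ^ 2 := by
    have hV : Fintype.card V = 2 * n := by rw [← card_add_card_compl A, hA, hB]; ring
    calc ((Fintype.card V - 2).choose 2 : ℝ) ≤ (Fintype.card V - 2 : ℕ) ^ 2 / 2 := by
          simpa using Nat.choose_le_pow_div (α := ℝ) 2 (Fintype.card V - 2)
      _ ≤ (2 * n : ℕ) ^ 2 / 2 := by gcongr; omega
      _ = 2 * n ^ 2 := by push_cast; ring
  have hab_le : (#{e ∈ H | a ∈ e ∧ b ∈ e} : ℝ) ≤ (Fintype.card V - 2).choose 2 := by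
    exact_mod_cast card_filter_mem_mem_le hedges hab
  have hba_le : (#{e ∈ H | b ∈ e ∧ a ∈ e} : ℝ) ≤ (Fintype.card V - 2).choose 2 := by
    exact_mod_cast card_filter_mem_mem_le hedges hab.symm
  rw [linkCount_compl_of_mem hedges rfl ha, linkCount_compl_of_mem hedges rfl ha,
    linkCount_compl_of_notMem hedges rfl hbA, linkCount_compl_of_notMem hedges rfl hbA]
  have := (Nat.cast_le (α := ℝ)).mpr hkey
  push_cast at this
  linarith

theorem stmt_15 {V : Type} [Fintype V] [DecidableEq V] (n : ℕ)
    (A B : Finset V) (H : Finset (Finset V))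
    (hdisj : Disjoint A B) (hunion : A ∪ B = Finset.univ)
    (hA : A.card = n) (hB : B.card = n)
    (hedges : ∀ e ∈ H, e.card = 4)
    (hdeg : ∀ S : Finset V, S.card = 3 →
      (n : ℝ) - 1 ≤ ((Finset.univ.filter (fun x => x ∉ S ∧ insert x S ∈ H)).card : ℝ))
    (hmin : ∀ A' B' : Finset V, Disjoint A' B' → A' ∪ B' = Finset.univ → A'.card = n →
      (H.filter (fun e => (e ∩ A).card = 2)).card ≤
        (H.filter (fun e => (e ∩ A').card = 2)).card) :
    ∀ a ∈ A, ∀ b ∈ B,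
      ((linkCount H b A B 2 1 : ℝ) - (linkCount H b A B 1 2 : ℝ)) - 4 * n ^ 2 ≤
        (linkCount H a A B 2 1 : ℝ) - (linkCount H a A B 1 2 : ℝ) :=
  stmt_15_general n A B H hdisj hunion hA hB hedges hmin
end

section
/- Let n be sufficiently large and let H be a 4-uniform hypergraph on 2n vertices with bipartition A ∪ B, |A| = |B| = n. Suppose every 3-set has co-degree at least n−1 and |H(A,A,B,B)| ≤ ε₀n⁴ with ε₀ = ε⁴ for sufficiently small ε > 0. If {a₁,a₂,b₁,b₂} with a₁,a₂ ∈ A, b₁,b₂ ∈ B is not an edge of H, then there exists a vertex z and vertices x ∈ N(a₁,a₂,z), y ∈ N(b₁,b₂,z), all distinct, such that x a₂ a₁ z b₁ b₂ y is a tight path in H (i.e., each of the 4-sets {x,a₂,a₁,z}, {a₂,a₁,z,b₁}, {a₁,z,b₁,b₂}, {z,b₁,b₂,y} is an edge). -/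
open Finset

set_option maxHeartbeats 1600000 in
theorem stmt_19 :
    ∃ ε' : ℝ, 0 < ε' ∧ ∀ ε : ℝ, 0 < ε → ε < ε' → ∃ n₀ : ℕ, ∀ n : ℕ, n₀ ≤ n →
    ∀ (V : Type) [Fintype V] [DecidableEq V],
    ∀ (A B : Finset V) (H : Finset (Finset V)),
      Disjoint A B → A ∪ B = Finset.univ → A.card = n → B.card = n →
      (∀ e ∈ H, e.card = 4) →
      (∀ S : Finset V, S.card = 3 →
        (n : ℝ) - 1 ≤ ((Finset.univ.filter (fun x => x ∉ S ∧ insert x S ∈ H)).card : ℝ)) →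
      ((H.filter (fun e => (e ∩ A).card = 2)).card : ℝ) ≤ ε ^ 4 * n ^ 4 →
      ∀ a₁ ∈ A, ∀ a₂ ∈ A, ∀ b₁ ∈ B, ∀ b₂ ∈ B, a₁ ≠ a₂ → b₁ ≠ b₂ →
        ({a₁, a₂, b₁, b₂} : Finset V) ∉ H →
        ∃ z x y : V, ([x, a₂, a₁, z, b₁, b₂, y] : List V).Nodup ∧
          ({x, a₂, a₁, z} : Finset V) ∈ H ∧
          ({a₂, a₁, z, b₁} : Finset V) ∈ H ∧
          ({a₁, z, b₁, b₂} : Finset V) ∈ H ∧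
          ({z, b₁, b₂, y} : Finset V) ∈ H := by
  refine ⟨1, one_pos, fun ε _ _ => ⟨5, ?_⟩⟩
  intro n hn V _ _ A B H hdisj huniv hA hB hcard4 hcodeg hH
  intro a₁ ha₁ a₂ ha₂ b₁ hb₁ b₂ hb₂ haa hbb hnedge
  have hab : ∀ a ∈ A, ∀ b ∈ B, a ≠ b := by
    intro a ha b hb h; exact (Finset.disjoint_left.mp hdisj ha) (h ▸ hb)
  have h11 := hab a₁ ha₁ b₁ hb₁
  have h12 := hab a₁ ha₁ b₂ hb₂
  have h21 := hab a₂ ha₂ b₁ hb₁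
  have h22 := hab a₂ ha₂ b₂ hb₂
  -- nat version of codegree
  have hco : ∀ S : Finset V, S.card = 3 →
      n - 1 ≤ (Finset.univ.filter (fun x => x ∉ S ∧ insert x S ∈ H)).card := by
    intro S hS
    have h := hcodeg S hS
    have h1 : (1 : ℕ) ≤ n := by omega
    have : ((n - 1 : ℕ) : ℝ) ≤ ((Finset.univ.filter (fun x => x ∉ S ∧ insert x S ∈ H)).card : ℝ) := by
      push_cast [Nat.cast_sub h1]; linarith
    exact_mod_cast this
  have hunivcard : (Finset.univ : Finset V).card = 2 * n := by
    rw [← huniv, Finset.card_union_of_disjoint hdisj, hA, hB]; ring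
  set N₁ := Finset.univ.filter (fun x => x ∉ ({a₂, a₁, b₁} : Finset V) ∧
    insert x ({a₂, a₁, b₁} : Finset V) ∈ H) with hN₁
  set N₂ := Finset.univ.filter (fun x => x ∉ ({a₁, b₁, b₂} : Finset V) ∧
    insert x ({a₁, b₁, b₂} : Finset V) ∈ H) with hN₂
  have hc1 : n - 1 ≤ N₁.card :=
    hco _ (Finset.card_eq_three.mpr ⟨a₂, a₁, b₁, haa.symm, h21, h11, rfl⟩)
  have hc2 : n - 1 ≤ N₂.card :=
    hco _ (Finset.card_eq_three.mpr ⟨a₁, b₁, b₂, h11, h12, hbb, rfl⟩)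
  set U : Finset V := Finset.univ \ ({a₁, a₂, b₁, b₂} : Finset V) with hU
  have hUcard : U.card = 2 * n - 4 := by
    rw [hU, Finset.card_sdiff_of_subset (Finset.subset_univ _), hunivcard]
    congr 1
    rw [Finset.card_insert_of_notMem (by simp [haa, h12, h11]),
      Finset.card_insert_of_notMem (by simp [h21, h22]),
      Finset.card_insert_of_notMem (by simp [hbb]), Finset.card_singleton]
  have key1 : insert b₂ ({a₂, a₁, b₁} : Finset V) = ({a₁, a₂, b₁, b₂} : Finset V) := by
    ext v; simp only [Finset.mem_insert, Finset.mem_singleton]; tauto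
  have key2 : insert a₂ ({a₁, b₁, b₂} : Finset V) = ({a₁, a₂, b₁, b₂} : Finset V) := by
    ext v; simp only [Finset.mem_insert, Finset.mem_singleton]; tauto
  have hs1 : N₁ ⊆ U := by
    intro x hx
    rw [hN₁, Finset.mem_filter] at hx
    obtain ⟨-, hxs, hxe⟩ := hx
    simp only [Finset.mem_insert, Finset.mem_singleton, not_or] at hxs
    have hxb₂ : x ≠ b₂ := by
      intro h; apply hnedge; rw [← key1]; rwa [h] at hxe
    simp only [hU, Finset.mem_sdiff, Finset.mem_univ, true_and, Finset.mem_insert,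
      Finset.mem_singleton, not_or]
    tauto
  have hs2 : N₂ ⊆ U := by
    intro x hx
    rw [hN₂, Finset.mem_filter] at hx
    obtain ⟨-, hxs, hxe⟩ := hx
    simp only [Finset.mem_insert, Finset.mem_singleton, not_or] at hxs
    have hxa₂ : x ≠ a₂ := by
      intro h; apply hnedge; rw [← key2]; rwa [h] at hxe
    simp only [hU, Finset.mem_sdiff, Finset.mem_univ, true_and, Finset.mem_insert,
      Finset.mem_singleton, not_or]
    tauto
  have hunion : (N₁ ∪ N₂).card ≤ 2 * n - 4 := hUcard ▸ Finset.card_le_card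
    (Finset.union_subset hs1 hs2)
  have hkey := Finset.card_inter_add_card_union N₁ N₂
  have hne : (N₁ ∩ N₂).Nonempty := by
    rw [← Finset.card_pos]; omega
  obtain ⟨z, hz⟩ := hne
  rw [Finset.mem_inter] at hz
  obtain ⟨hz1, hz2⟩ := hz
  have hzU : z ∈ U := hs1 hz1
  simp only [hU, Finset.mem_sdiff, Finset.mem_univ, true_and, Finset.mem_insert,
    Finset.mem_singleton, not_or] at hzU
  obtain ⟨hza₁, hza₂, hzb₁, hzb₂⟩ := hzU
  rw [hN₁, Finset.mem_filter] at hz1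
  rw [hN₂, Finset.mem_filter] at hz2
  have hE2 : ({a₂, a₁, z, b₁} : Finset V) ∈ H := by
    have : insert z ({a₂, a₁, b₁} : Finset V) = ({a₂, a₁, z, b₁} : Finset V) := by
      ext v; simp only [Finset.mem_insert, Finset.mem_singleton]; tauto
    rw [← this]; exact hz1.2.2
  have hE3 : ({a₁, z, b₁, b₂} : Finset V) ∈ H := by
    have : insert z ({a₁, b₁, b₂} : Finset V) = ({a₁, z, b₁, b₂} : Finset V) := by
      ext v; simp only [Finset.mem_insert, Finset.mem_singleton]; tauto
    rw [← this]; exact hz2.2.2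
  -- find x
  set N₃ := Finset.univ.filter (fun x => x ∉ ({a₂, a₁, z} : Finset V) ∧
    insert x ({a₂, a₁, z} : Finset V) ∈ H) with hN₃
  have hc3 : n - 1 ≤ N₃.card :=
    hco _ (Finset.card_eq_three.mpr ⟨a₂, a₁, z, haa.symm, (Ne.symm hza₂), (Ne.symm hza₁), rfl⟩)
  have hx3 : (N₃ \ ({b₁, b₂} : Finset V)).Nonempty := by
    rw [← Finset.card_pos]
    have := Finset.le_card_sdiff ({b₁, b₂} : Finset V) N₃
    have h2 : ({b₁, b₂} : Finset V).card ≤ 2 := by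
      apply le_trans (Finset.card_insert_le _ _); simp
    omega
  obtain ⟨x, hx⟩ := hx3
  rw [Finset.mem_sdiff, hN₃, Finset.mem_filter] at hx
  obtain ⟨⟨-, hxs, hxe⟩, hxb⟩ := hx
  simp only [Finset.mem_insert, Finset.mem_singleton, not_or] at hxs hxb
  have hE1 : ({x, a₂, a₁, z} : Finset V) ∈ H := hxe
  -- find y
  set N₄ := Finset.univ.filter (fun w => w ∉ ({z, b₁, b₂} : Finset V) ∧
    insert w ({z, b₁, b₂} : Finset V) ∈ H) with hN₄
  have hc4 : n - 1 ≤ N₄.card :=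
    hco _ (Finset.card_eq_three.mpr ⟨z, b₁, b₂, hzb₁, hzb₂, hbb, rfl⟩)
  have hy4 : (N₄ \ ({a₁, a₂, x} : Finset V)).Nonempty := by
    rw [← Finset.card_pos]
    have := Finset.le_card_sdiff ({a₁, a₂, x} : Finset V) N₄
    have h3 : ({a₁, a₂, x} : Finset V).card ≤ 3 := by
      refine (Finset.card_insert_le _ _).trans ?_
      have := Finset.card_insert_le a₂ ({x} : Finset V)
      simp only [Finset.card_singleton] at this
      omega
    omega
  obtain ⟨y, hy⟩ := hy4
  rw [Finset.mem_sdiff, hN₄, Finset.mem_filter] at hy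
  obtain ⟨⟨-, hys, hye⟩, hya⟩ := hy
  simp only [Finset.mem_insert, Finset.mem_singleton, not_or] at hys hya
  have hE4 : ({z, b₁, b₂, y} : Finset V) ∈ H := by
    have : insert y ({z, b₁, b₂} : Finset V) = ({z, b₁, b₂, y} : Finset V) := by
      ext v; simp only [Finset.mem_insert, Finset.mem_singleton]; tauto
    rw [← this]; exact hye
  refine ⟨z, x, y, ?_, hE1, hE2, hE3, hE4⟩
  simp only [List.nodup_cons, List.mem_cons, List.mem_singleton, List.not_mem_nil, or_false,
    not_or, List.nodup_nil, and_true]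
  exact ⟨⟨hxs.1, hxs.2.1, hxs.2.2, hxb.1, hxb.2, fun h => hya.2.2 h.symm⟩,
    ⟨haa.symm, Ne.symm hza₂, h21, h22, fun h => hya.2.1 h.symm⟩,
    ⟨Ne.symm hza₁, h11, h12, fun h => hya.1 h.symm⟩,
    ⟨hzb₁, hzb₂, fun h => hys.1 h.symm⟩,
    ⟨hbb, fun h => hys.2.1 h.symm⟩,
    fun h => hys.2.2 h.symm, not_false⟩
end
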